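/- Let G be a non-abelian finite simple group. Then b3(G), the maximum over all permutation representations of G of the minimum base size, equals the maximum over all primitive faithful actions of G on nonempty finite sets of the minimum base size; in other words, b3(G) can be calculated by considering only the primitive permutation representations of G. -/

import Mathlib

/-! If `G` acts on `Ω` and some point `ω` is moved, pick a maximal subgroup `M` containing the
stabiliser of `ω`. As `G` is simple, it acts faithfully and primitively on `G ⧸ M`, and since
`stab (a • ω) ≤ stab (a M)`, translating a base `(aᵢ M)` of `G ⧸ M` to the points `aᵢ • ω` gives a
base of `Ω` of the same size. So every minimal base size is dominated by that of a faithful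
primitive action. -/

/-- A base: the pointwise stabiliser of the sequence equals the kernel of the action. -/
def IsBase (G : Type) [Group G] {Ω : Type} [MulAction G Ω] {k : ℕ} (b : Fin k → Ω) : Prop :=
  ∀ g : G, (∀ i, g • b i = b i) → ∀ ω : Ω, g • ω = ω

/-- Irredundant: no point is fixed by the pointwise stabiliser of its predecessors. -/
def IsIrredundant (G : Type) [Group G] {Ω : Type} [MulAction G Ω] {k : ℕ} (b : Fin k → Ω) : Prop :=
  ∀ i : Fin k, ∃ g : G, (∀ j, j < i → g • b j = b j) ∧ g • b i ≠ b i

/-- Minimal: no point is fixed by the pointwise stabiliser of the other points. -/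
def IsMinimal (G : Type) [Group G] {Ω : Type} [MulAction G Ω] {k : ℕ} (b : Fin k → Ω) : Prop :=
  ∀ i : Fin k, ∃ g : G, (∀ j, j ≠ i → g • b j = b j) ∧ g • b i ≠ b i

noncomputable def b1 (G : Type) [Group G] : ℕ :=
  sSup {k | ∃ (Ω : Type) (_ : Finite Ω) (m : MulAction G Ω), ∃ b : Fin k → Ω,
    @IsBase G _ Ω m k b ∧ @IsIrredundant G _ Ω m k b}

noncomputable def b2 (G : Type) [Group G] : ℕ :=
  sSup {k | ∃ (Ω : Type) (_ : Finite Ω) (m : MulAction G Ω), ∃ b : Fin k → Ω,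
    @IsBase G _ Ω m k b ∧ @IsMinimal G _ Ω m k b}

noncomputable def minBaseSize (G : Type) [Group G] (Ω : Type) [MulAction G Ω] : ℕ :=
  sInf {k | ∃ b : Fin k → Ω, IsBase G b}

noncomputable def b3 (G : Type) [Group G] : ℕ :=
  sSup {k | ∃ (Ω : Type) (_ : Finite Ω) (m : MulAction G Ω), k = @minBaseSize G _ Ω m}

/-- The length of the longest chain of subgroups of `G`. -/
noncomputable def subgroupChainLength (G : Type) [Group G] : ℕ :=
  sSup {l | ∃ c : Fin (l + 1) → Subgroup G, StrictAnti c ∧ c 0 = ⊤ ∧ c (Fin.last l) = ⊥}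

def IsFaithfulAction (G Ω : Type) [Group G] [MulAction G Ω] : Prop :=
  ∀ g : G, (∀ ω : Ω, g • ω = ω) → g = 1

def IsTransitiveAction (G Ω : Type) [Group G] [MulAction G Ω] : Prop :=
  ∀ x y : Ω, ∃ g : G, g • x = y

def IsPrimitiveAction (G Ω : Type) [Group G] [MulAction G Ω] : Prop :=
  IsTransitiveAction G Ω ∧ Nontrivial Ω ∧
    ∀ r : Setoid Ω, (∀ (g : G) (x y : Ω), r.r x y → r.r (g • x) (g • y)) → r = ⊥ ∨ r = ⊤

def IsIndependent (G : Type) [Group G] (S : Finset G) : Prop :=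
  ∀ g ∈ S, g ∉ Subgroup.closure ((S : Set G) \ {g})

noncomputable def maxIndependent (G : Type) [Group G] : ℕ :=
  sSup {n | ∃ S : Finset G, S.card = n ∧ IsIndependent G S}

def IsJoinEmbedding (G : Type) [Group G] (n : ℕ) (f : Finset (Fin n) → Subgroup G) : Prop :=
  Function.Injective f ∧ f ∅ = ⊥ ∧ ∀ I J, f (I ∪ J) = f I ⊔ f J

def IsMeetEmbedding (G : Type) [Group G] (n : ℕ) (f : Finset (Fin n) → Subgroup G) : Prop :=
  Function.Injective f ∧ f ∅ = ⊤ ∧ ∀ I J, f (I ∪ J) = f I ⊓ f J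

open MulAction

section BaseSize

variable {G : Type} [Group G]

theorem minBaseSize_le_of_isBase {Ω : Type} [MulAction G Ω] {k : ℕ} {b : Fin k → Ω}
    (hb : IsBase G b) : minBaseSize G Ω ≤ k :=
  Nat.sInf_le ⟨b, hb⟩

theorem exists_isBase_minBaseSize (Ω : Type) [MulAction G Ω] [Finite Ω] :
    ∃ b : Fin (minBaseSize G Ω) → Ω, IsBase G b := by
  obtain ⟨n, ⟨e⟩⟩ := Finite.exists_equiv_fin Ω
  have hmem : minBaseSize G Ω ∈ {k | ∃ b : Fin k → Ω, IsBase G b} :=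
    Nat.sInf_mem ⟨n, e.symm, fun g hg ω => by simpa using hg (e ω)⟩
  exact hmem

theorem minBaseSize_le_card [Finite G] (Ω : Type) [MulAction G Ω] :
    minBaseSize G Ω ≤ Nat.card G := by
  classical
  cases isEmpty_or_nonempty Ω with
  | inl _ =>
    exact (minBaseSize_le_of_isBase (b := (Fin.elim0 : Fin 0 → Ω))
      fun _ _ ω => isEmptyElim ω).trans (Nat.zero_le _)
  | inr _ =>
    let moved (g : G) : Ω := if h : ∃ ω : Ω, g • ω ≠ ω then h.choose else Classical.arbitrary Ω
    refine minBaseSize_le_of_isBase (b := moved ∘ (Finite.equivFin G).symm) fun g hg ω => ?_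
    by_contra hω
    have hex : ∃ ω : Ω, g • ω ≠ ω := ⟨ω, hω⟩
    have hmoved := hg (Finite.equivFin G g)
    simp only [Function.comp_apply, Equiv.symm_apply_apply, moved, dif_pos hex] at hmoved
    exact hex.choose_spec hmoved

theorem minBaseSize_le_of_stabilizer_le {X Y : Type} [MulAction G X] [MulAction G Y] [Finite Y]
    (hY : IsFaithfulAction G Y) (ψ : Y → X) (hψ : ∀ y, stabilizer G (ψ y) ≤ stabilizer G y) :
    minBaseSize G X ≤ minBaseSize G Y := by
  obtain ⟨b, hb⟩ := exists_isBase_minBaseSize (G := G) Y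
  refine minBaseSize_le_of_isBase (b := ψ ∘ b) fun g hg x => ?_
  rw [hY g (hb g fun i => hψ (b i) (hg i)), one_smul]

end BaseSize

section Quotient

variable {G : Type} [Group G]

theorem stabilizer_smul_le_stabilizer_mk {Ω : Type} [MulAction G Ω] {ω : Ω} {M : Subgroup G}
    (h : stabilizer G ω ≤ M) (a : G) : stabilizer G (a • ω) ≤ stabilizer G (a : G ⧸ M) := by
  have hM : stabilizer G (a • ((1 : G) : G ⧸ M)) = stabilizer G (a : G ⧸ M) := by
    rw [Quotient.smul_mk, smul_eq_mul, mul_one]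
  rw [← hM, stabilizer_smul_eq_stabilizer_map_conj, stabilizer_smul_eq_stabilizer_map_conj,
    stabilizer_quotient]
  exact Subgroup.map_mono h

theorem isFaithfulAction_quotient (hG : IsSimpleGroup G) {M : Subgroup G} (hM : M ≠ ⊤) :
    IsFaithfulAction G (G ⧸ M) := by
  intro g hg
  have hcore : g ∈ M.normalCore := by
    rw [Subgroup.normalCore_eq_ker, MonoidHom.mem_ker]
    exact Equiv.ext hg
  rcases hG.eq_bot_or_eq_top_of_normal _ M.normalCore_normal with hbot | htop
  · simpa [hbot] using hcore
  · exact absurd (top_le_iff.mp (htop ▸ M.normalCore_le)) hM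

theorem isBlock_setOf_rel {X : Type} [MulAction G X] (r : Setoid X)
    (hr : ∀ (g : G) (x y : X), r.r x y → r.r (g • x) (g • y)) (x : X) :
    IsBlock G {y | r.r y x} := by
  have hr' (g : G) (u v : X) : r.r (g • u) (g • v) ↔ r.r u v :=
    ⟨fun h => by simpa using hr g⁻¹ _ _ h, hr g u v⟩
  rw [isBlock_iff_smul_eq_of_mem]
  intro g a ha hga
  have hgx : r.r (g • x) x := r.trans (r.symm ((hr' g a x).mpr ha)) hga
  ext y
  rw [Set.mem_smul_set_iff_inv_smul_mem, Set.mem_ofPred_eq, Set.mem_ofPred_eq,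
    ← hr' g, smul_inv_smul]
  exact ⟨fun h => r.trans h hgx, fun h => r.trans h (r.symm hgx)⟩

theorem isPrimitiveAction_of_isPreprimitive (X : Type) [MulAction G X] [IsPreprimitive G X]
    [Nontrivial X] : IsPrimitiveAction G X := by
  refine ⟨IsPretransitive.exists_smul_eq, inferInstance, fun r hr => ?_⟩
  by_cases huniv : ∃ x, {y | r.r y x} = Set.univ
  · obtain ⟨x, hx⟩ := huniv
    right
    ext a b
    have hrel (y : X) : r.r y x := Set.eq_univ_iff_forall.mp hx y
    simpa [Setoid.top_def] using r.trans (hrel a) (r.symm (hrel b))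
  · left
    simp only [not_exists] at huniv
    ext a b
    refine ⟨fun hab => ?_, fun hab => hab ▸ r.refl a⟩
    have hsub := ((isBlock_setOf_rel r hr b).subsingleton_or_eq_univ).resolve_right (huniv b)
    exact hsub hab (r.refl b)

theorem isPrimitiveAction_quotient_of_isCoatom {M : Subgroup G} (hM : IsCoatom M) :
    IsPrimitiveAction G (G ⧸ M) := by
  have : Nontrivial (G ⧸ M) := QuotientGroup.nontrivial_iff.mpr hM.1
  have : IsPreprimitive G (G ⧸ M) := by
    rw [← isCoatom_stabilizer_iff_preprimitive G ((1 : G) : G ⧸ M), stabilizer_quotient]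
    exact hM
  exact isPrimitiveAction_of_isPreprimitive _

end Quotient

theorem exists_isCoatom_minBaseSize_le {G : Type} [Group G] [Finite G] (hG : IsSimpleGroup G)
    (Ω : Type) [MulAction G Ω] :
    ∃ M : Subgroup G, IsCoatom M ∧ minBaseSize G Ω ≤ minBaseSize G (G ⧸ M) := by
  have : IsCoatomic (Subgroup G) := Finite.to_isCoatomic
  by_cases hfix : ∀ ω : Ω, stabilizer G ω = ⊤
  · have hzero : minBaseSize G Ω = 0 := Nat.le_zero.mp <|
      minBaseSize_le_of_isBase (b := (Fin.elim0 : Fin 0 → Ω)) fun g _ ω => by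
        rw [← mem_stabilizer_iff, hfix ω]
        exact Subgroup.mem_top g
    have : Nontrivial G := hG.toNontrivial
    obtain ⟨M, hM, -⟩ := (eq_top_or_exists_le_coatom (⊥ : Subgroup G)).resolve_left bot_ne_top
    exact ⟨M, hM, hzero ▸ Nat.zero_le _⟩
  · simp only [not_forall] at hfix
    obtain ⟨ω, hω⟩ := hfix
    obtain ⟨M, hM, hle⟩ := (eq_top_or_exists_le_coatom _).resolve_left hω
    refine ⟨M, hM, minBaseSize_le_of_stabilizer_le (isFaithfulAction_quotient hG hM.1)
      (fun y => y.out • ω) fun y => ?_⟩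
    simpa using stabilizer_smul_le_stabilizer_mk hle y.out

theorem b3_via_primitive_general (G : Type) [Group G] [Finite G]
    (hsimple : IsSimpleGroup G) :
    b3 G = sSup {k | ∃ (Ω' : Type) (_ : Finite Ω') (m' : MulAction G Ω'), Nonempty Ω' ∧
      @IsFaithfulAction G Ω' _ m' ∧ @IsPrimitiveAction G Ω' _ m' ∧
      k = @minBaseSize G _ Ω' m'} := by
  set SP : Set ℕ := {k | ∃ (Ω' : Type) (_ : Finite Ω') (m' : MulAction G Ω'), Nonempty Ω' ∧
      @IsFaithfulAction G Ω' _ m' ∧ @IsPrimitiveAction G Ω' _ m' ∧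
      k = @minBaseSize G _ Ω' m'}
  set S3 : Set ℕ := {k | ∃ (Ω : Type) (_ : Finite Ω) (m : MulAction G Ω),
    k = @minBaseSize G _ Ω m}
  have hbdd : BddAbove S3 :=
    ⟨Nat.card G, by rintro _ ⟨Ω, _, _, rfl⟩; exact minBaseSize_le_card Ω⟩
  have hsub : SP ⊆ S3 := by
    rintro _ ⟨Ω, hΩ, m, -, -, -, rfl⟩
    exact ⟨Ω, hΩ, m, rfl⟩
  have hprim (M : Subgroup G) (hM : IsCoatom M) : minBaseSize G (G ⧸ M) ∈ SP :=
    ⟨G ⧸ M, inferInstance, inferInstance, ⟨(1 : G)⟩, isFaithfulAction_quotient hsimple hM.1,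
      isPrimitiveAction_quotient_of_isCoatom hM, rfl⟩
  obtain ⟨M₀, hM₀, -⟩ := exists_isCoatom_minBaseSize_le hsimple PUnit
  refine le_antisymm (csSup_le ⟨_, hsub (hprim M₀ hM₀)⟩ ?_)
    (csSup_le_csSup hbdd ⟨_, hprim M₀ hM₀⟩ hsub)
  rintro _ ⟨Ω, _, _, rfl⟩
  obtain ⟨M, hM, hle⟩ := exists_isCoatom_minBaseSize_le hsimple Ω
  exact hle.trans (le_csSup (hbdd.mono hsub) (hprim M hM))

/-- for a non-abelian finite simple group G, b3(G) equals the maximum of the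
minimum base size over the primitive faithful actions of G on nonempty finite sets. -/
theorem b3_via_primitive (G : Type) [Group G] [Finite G]
    (hsimple : IsSimpleGroup G) (hnonab : ¬ ∀ a b : G, a * b = b * a) :
    b3 G = sSup {k | ∃ (Ω' : Type) (_ : Finite Ω') (m' : MulAction G Ω'), Nonempty Ω' ∧
      @IsFaithfulAction G Ω' _ m' ∧ @IsPrimitiveAction G Ω' _ m' ∧
      k = @minBaseSize G _ Ω' m'} :=
  b3_via_primitive_general G hsimple
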